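/- Let G be a group and let α be an automorphism of G. Then α is a tensor central automorphism of G if and only if x ⊗ α(y) = (x ⊗ y)^{[y,α]} for all x, y ∈ G, where [y, α] = y⁻¹α(y) and the exponent denotes the action of G on G ⊗ G. -/

import Mathlib

/-!
Non-abelian tensor square `G ⊗ G`, constructed as the presented group on
symbols `g ⊗ h` with the defining relations
`g*g' ⊗ h = (g^{g'} ⊗ h^{g'}) * (g' ⊗ h)` and
`g ⊗ h*h' = (g ⊗ h') * (g^{h'} ⊗ h^{h'})`, where `a ^ b = b⁻¹ * a * b`.
-/

variable {G : Type*} [Group G]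

/-- Defining relations of the non-abelian tensor square `G ⊗ G`. -/
def tensorRels (G : Type*) [Group G] : Set (FreeGroup (G × G)) :=
  {r | (∃ g g' h : G,
      r = FreeGroup.of (g * g', h) *
        (FreeGroup.of (g'⁻¹ * g * g', g'⁻¹ * h * g') * FreeGroup.of (g', h))⁻¹) ∨
    (∃ g h h' : G,
      r = FreeGroup.of (g, h * h') *
        (FreeGroup.of (g, h') * FreeGroup.of (h'⁻¹ * g * h', h'⁻¹ * h * h'))⁻¹)}

/-- The non-abelian tensor square `G ⊗ G`. -/
abbrev TensorSquare (G : Type*) [Group G] := PresentedGroup (tensorRels G)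

/-- The tensor `g ⊗ h` as an element of `G ⊗ G`. -/
def tmul (g h : G) : TensorSquare G := PresentedGroup.of (g, h)

theorem tensorRels_eq_one {r : FreeGroup (G × G)} (hr : r ∈ tensorRels G) :
    PresentedGroup.mk (tensorRels G) r = 1 :=
  (QuotientGroup.eq_one_iff r).mpr (Subgroup.subset_normalClosure hr)

/-- The first defining relation of `G ⊗ G`. -/
theorem tmul_rel₁ (g g' h : G) :
    tmul (g * g') h = tmul (g'⁻¹ * g * g') (g'⁻¹ * h * g') * tmul g' h := by
  have h1 := tensorRels_eq_one (G := G) (Or.inl ⟨g, g', h, rfl⟩)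
  rw [map_mul, map_inv, map_mul, mul_inv_eq_one] at h1
  exact h1

/-- The second defining relation of `G ⊗ G`. -/
theorem tmul_rel₂ (g h h' : G) :
    tmul g (h * h') = tmul g h' * tmul (h'⁻¹ * g * h') (h'⁻¹ * h * h') := by
  have h1 := tensorRels_eq_one (G := G) (Or.inr ⟨g, h, h', rfl⟩)
  rw [map_mul, map_inv, map_mul, mul_inv_eq_one] at h1
  exact h1

/-- The action of `x : G` on `G ⊗ G`, determined by `(g ⊗ h) ^ x = (x⁻¹*g*x) ⊗ (x⁻¹*h*x)`. -/
def tensorAct (x : G) : TensorSquare G →* TensorSquare G :=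
  PresentedGroup.toGroup
    (f := fun p : G × G => tmul (x⁻¹ * p.1 * x) (x⁻¹ * p.2 * x))
    (by
      rintro r (⟨g, g', h, rfl⟩ | ⟨g, h, h', rfl⟩) <;>
        simp only [map_mul, map_inv, FreeGroup.lift_apply_of, mul_inv_eq_one]
      · have := tmul_rel₁ (x⁻¹ * g * x) (x⁻¹ * g' * x) (x⁻¹ * h * x)
        convert this using 2 <;> group
      · have := tmul_rel₂ (x⁻¹ * g * x) (x⁻¹ * h * x) (x⁻¹ * h' * x)
        convert this using 2 <;> group)

@[simp] theorem tensorAct_tmul (x g h : G) :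
    tensorAct x (tmul g h) = tmul (x⁻¹ * g * x) (x⁻¹ * h * x) :=
  PresentedGroup.toGroup.of _

/-- An automorphism `α` of `G` is tensor commuting if `g ⊗ α g = 1` for all `g`. -/
def IsTensorCommuting (α : G ≃* G) : Prop := ∀ g : G, tmul g (α g) = 1

/-- An automorphism `α` of `G` is tensor central if `[x, α] = x⁻¹ * α x` lies in the
tensor center of `G`, i.e. `(x⁻¹ * α x) ⊗ y = 1` for all `x y`. -/
def IsTensorCentral (α : G ≃* G) : Prop := ∀ x y : G, tmul (x⁻¹ * α x) y = 1

/-- The inner automorphism `T_g : x ↦ x ^ g = g⁻¹ * x * g` of `G` induced by `g`. -/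
def innerAut (g : G) : G ≃* G := MulAut.conj g⁻¹

-- Well defined because swapping the factors exchanges the two defining relations.
def tensorSwap : TensorSquare G →* TensorSquare G :=
  PresentedGroup.toGroup
    (f := fun p : G × G => (tmul p.2 p.1)⁻¹)
    (by
      rintro r (⟨g, g', h, rfl⟩ | ⟨g, h, h', rfl⟩) <;>
        simp only [map_mul, map_inv, FreeGroup.lift_apply_of]
      · rw [tmul_rel₂ h g g']; group
      · rw [tmul_rel₁ h h' g]; group)

@[simp] theorem tensorSwap_tmul (g h : G) : tensorSwap (tmul g h) = (tmul h g)⁻¹ :=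
  PresentedGroup.toGroup.of _

theorem tmul_eq_one_comm {a b : G} : tmul a b = 1 ↔ tmul b a = 1 := by
  constructor <;> intro h
  · simpa [h] using (tensorSwap_tmul a b).symm
  · simpa [h] using (tensorSwap_tmul b a).symm

theorem tmul_mul_right (g h h' : G) :
    tmul g (h * h') = tmul g h' * tensorAct h' (tmul g h) := by
  rw [tmul_rel₂, tensorAct_tmul]

theorem tmul_eq_tensorAct_iff (x y z : G) :
    tmul x z = tensorAct (y⁻¹ * z) (tmul x y) ↔ tmul x (y⁻¹ * z) = 1 := by
  have hz : tmul x z = tmul x (y⁻¹ * z) * tensorAct (y⁻¹ * z) (tmul x y) := by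
    rw [← tmul_mul_right, mul_inv_cancel_left]
  rw [hz, mul_eq_right]

/-- An automorphism `α` of `G` is tensor central iff
`x ⊗ α y = (x ⊗ y) ^ [y, α]` for all `x y ∈ G`, where `[y, α] = y⁻¹ * α y`. -/
theorem stmt_13 (G : Type*) [Group G] (α : G ≃* G) :
    IsTensorCentral α ↔ ∀ x y : G, tmul x (α y) = tensorAct (y⁻¹ * α y) (tmul x y) := by
  simp only [IsTensorCentral, tmul_eq_tensorAct_iff]
  exact forall_comm.trans (forall₂_congr fun _ _ => tmul_eq_one_comm)
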